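/- arXiv:math/9907030 — 6 statements merged into one kernel-verified Lean document; each statement's English description precedes it below -/
import Mathlib

section
/- Let A be a C*-algebra with a bounded approximate identity (e_λ). Then for every x in the Haagerup tensor product completion A ⊗_h A, one has x(1 ⊗ e_λ) → x and (e_λ ⊗ 1)x → x in the Haagerup norm. -/
/-!
The Haagerup norm satisfies `‖p ⊗ q‖_h ≤ ‖p‖ ‖q‖`, so `(p, q) ↦ p ⊗ q` is continuous into
`A ⊗_h A` and `(p ⊗ q)(1 ⊗ e_λ) = p ⊗ q e_λ → p ⊗ q`; likewise on the left. By linearity the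
convergence holds on the dense image of `A ⊙ A`, and the operators `x ↦ x(1 ⊗ e_λ)` are uniformly
bounded, hence equicontinuous, so the set where they converge to the identity is closed.
-/

open scoped TensorProduct
open Filter Topology

/-- The Haagerup norm of an element of the algebraic tensor product `A ⊙ A`:
the infimum of `‖∑ pᵢ pᵢ*‖^{1/2} · ‖∑ qᵢ* qᵢ‖^{1/2}` over all finite representations
`x = ∑ pᵢ ⊗ qᵢ`. -/
noncomputable def haagerupNorm (A : Type*) [NonUnitalNormedRing A] [StarRing A]
    [NormedSpace ℂ A] (x : A ⊗[ℂ] A) : ℝ :=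
  sInf { c : ℝ | ∃ (n : ℕ) (p q : Fin n → A),
    x = ∑ i, p i ⊗ₜ[ℂ] q i ∧
    c = Real.sqrt ‖∑ i, p i * star (p i)‖ * Real.sqrt ‖∑ i, star (q i) * q i‖ }

lemma haagerupNorm_tmul_le {A : Type*} [NonUnitalNormedRing A] [StarRing A] [CStarRing A]
    [NormedSpace ℂ A] (p q : A) :
    haagerupNorm A (p ⊗ₜ[ℂ] q) ≤ ‖p‖ * ‖q‖ := by
  apply csInf_le
  · refine ⟨0, ?_⟩
    rintro c ⟨n, p', q', -, rfl⟩
    positivity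
  · refine ⟨1, fun _ => p, fun _ => q, by simp, ?_⟩
    simp [CStarRing.norm_self_mul_star, CStarRing.norm_star_mul_self]

section

variable {𝕜 : Type*} [NontriviallyNormedField 𝕜] {X : Type*} [SeminormedAddCommGroup X]
  [NormedSpace 𝕜 X] {Λ : Type*} {l : Filter Λ}

theorem tendsto_apply_self_of_dense {T : Λ → X →L[𝕜] X} {C : ℝ} (hT : ∀ i, ‖T i‖ ≤ C)
    {S : Set X} (hS : Dense S) (h : ∀ y ∈ S, Tendsto (T · y) l (𝓝 y)) (x : X) :
    Tendsto (T · x) l (𝓝 x) := by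
  have hequi : Equicontinuous ((↑) ∘ T : Λ → X → X) :=
    ((NormedSpace.equicontinuous_TFAE T).out 5 1).mp (⟨C, hT⟩ : ∃ C, ∀ i, ‖T i‖ ≤ C)
  have hclosed := hequi.isClosed_setOfPred_tendsto (l := l) continuous_id
  exact hclosed.closure_subset_iff.mpr h (hS.closure_eq.symm ▸ Set.mem_univ x)

theorem tendsto_apply_self_of_tmul {E F : Type*} [AddCommGroup E] [Module 𝕜 E]
    [AddCommGroup F] [Module 𝕜 F] (ι : E ⊗[𝕜] F →ₗ[𝕜] X) (hdense : DenseRange ι)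
    {T : Λ → X →L[𝕜] X} {C : ℝ} (hT : ∀ i, ‖T i‖ ≤ C)
    (h : ∀ p q, Tendsto (T · (ι (p ⊗ₜ q))) l (𝓝 (ι (p ⊗ₜ q)))) (x : X) :
    Tendsto (T · x) l (𝓝 x) := by
  refine tendsto_apply_self_of_dense hT hdense ?_ x
  rintro _ ⟨z, rfl⟩
  induction z using TensorProduct.induction_on with
  | zero => simpa using tendsto_const_nhds
  | tmul p q => exact h p q
  | add y z hy hz => simpa only [map_add] using hy.add hz

theorem Filter.Tendsto.tmul_of_norm_le {E F : Type*} [SeminormedAddCommGroup E]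
    [NormedSpace 𝕜 E] [SeminormedAddCommGroup F] [NormedSpace 𝕜 F] (ι : E ⊗[𝕜] F →ₗ[𝕜] X)
    (hι : ∀ p q, ‖ι (p ⊗ₜ q)‖ ≤ ‖p‖ * ‖q‖) {f : Λ → E} {g : Λ → F} {p : E} {q : F}
    (hf : Tendsto f l (𝓝 p)) (hg : Tendsto g l (𝓝 q)) :
    Tendsto (fun i => ι (f i ⊗ₜ g i)) l (𝓝 (ι (p ⊗ₜ q))) :=
  (((TensorProduct.mk 𝕜 E F).compr₂ ι).mkContinuous₂ 1
    fun p q => by simpa using hι p q).continuous₂.tendsto (p, q) |>.comp (hf.prodMk_nhds hg)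

end

theorem approx_identity_haagerup_general
    {A : Type*}
    [NonUnitalNormedRing A] [StarRing A] [CStarRing A] [NormedSpace ℂ A]
    {X : Type*} [NormedAddCommGroup X] [NormedSpace ℂ X]
    (ι : A ⊗[ℂ] A →ₗ[ℂ] X)
    (hiso : ∀ y : A ⊗[ℂ] A, ‖ι y‖ = haagerupNorm A y)
    (hdense : DenseRange ι)
    (Rm Lm : A → X →L[ℂ] X)
    (hR : ∀ (a p q : A), Rm a (ι (p ⊗ₜ[ℂ] q)) = ι (p ⊗ₜ[ℂ] (q * a)))
    (hL : ∀ (a p q : A), Lm a (ι (p ⊗ₜ[ℂ] q)) = ι ((a * p) ⊗ₜ[ℂ] q))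
    (hRnorm : ∀ a : A, ‖Rm a‖ ≤ ‖a‖) (hLnorm : ∀ a : A, ‖Lm a‖ ≤ ‖a‖)
    {Λ : Type*} (l : Filter Λ) (e : Λ → A) (C : ℝ)
    (hbdd : ∀ i, ‖e i‖ ≤ C)
    (happrox : ∀ a : A, Filter.Tendsto (fun i => e i * a) l (nhds a) ∧
      Filter.Tendsto (fun i => a * e i) l (nhds a))
    (x : X) :
    Filter.Tendsto (fun i => Rm (e i) x) l (nhds x) ∧
      Filter.Tendsto (fun i => Lm (e i) x) l (nhds x) := by
  have hι p q : ‖ι (p ⊗ₜ[ℂ] q)‖ ≤ ‖p‖ * ‖q‖ := (hiso _).trans_le (haagerupNorm_tmul_le p q)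
  constructor
  · refine tendsto_apply_self_of_tmul ι hdense (fun i => (hRnorm _).trans (hbdd i)) (fun p q => ?_) x
    simp only [hR]
    exact tendsto_const_nhds.tmul_of_norm_le ι hι (happrox q).2
  · refine tendsto_apply_self_of_tmul ι hdense (fun i => (hLnorm _).trans (hbdd i)) (fun p q => ?_) x
    simp only [hL]
    exact (happrox p).1.tmul_of_norm_le ι hι tendsto_const_nhds

/-- If `(e_λ)` is a bounded approximate identity of `A`, then for every
`x` in the Haagerup tensor product `A ⊗_h A` (modelled as an abstract completion `X` of
`A ⊙ A` for the Haagerup norm) one has `x(1 ⊗ e_λ) → x` and `(e_λ ⊗ 1)x → x` in norm.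
Here `Rm a` and `Lm a` are the continuous extensions of `p ⊗ q ↦ p ⊗ qa` and
`p ⊗ q ↦ ap ⊗ q`, which are bounded with norm at most `‖a‖`. -/
theorem approx_identity_haagerup
    {A : Type*}
    [NonUnitalNormedRing A] [StarRing A] [CStarRing A] [CompleteSpace A]
    [NormedSpace ℂ A] [IsScalarTower ℂ A A] [SMulCommClass ℂ A A] [StarModule ℂ A]
    {X : Type*} [NormedAddCommGroup X] [NormedSpace ℂ X] [CompleteSpace X]
    (ι : A ⊗[ℂ] A →ₗ[ℂ] X)
    (hiso : ∀ y : A ⊗[ℂ] A, ‖ι y‖ = haagerupNorm A y)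
    (hdense : DenseRange ι)
    (Rm Lm : A → X →L[ℂ] X)
    (hR : ∀ (a p q : A), Rm a (ι (p ⊗ₜ[ℂ] q)) = ι (p ⊗ₜ[ℂ] (q * a)))
    (hL : ∀ (a p q : A), Lm a (ι (p ⊗ₜ[ℂ] q)) = ι ((a * p) ⊗ₜ[ℂ] q))
    (hRnorm : ∀ a : A, ‖Rm a‖ ≤ ‖a‖) (hLnorm : ∀ a : A, ‖Lm a‖ ≤ ‖a‖)
    {Λ : Type*} (l : Filter Λ) [l.NeBot] (e : Λ → A) (C : ℝ)
    (hbdd : ∀ i, ‖e i‖ ≤ C)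
    (happrox : ∀ a : A, Filter.Tendsto (fun i => e i * a) l (nhds a) ∧
      Filter.Tendsto (fun i => a * e i) l (nhds a))
    (x : X) :
    Filter.Tendsto (fun i => Rm (e i) x) l (nhds x) ∧
      Filter.Tendsto (fun i => Lm (e i) x) l (nhds x) :=
  approx_identity_haagerup_general ι hiso hdense Rm Lm hR hL hRnorm hLnorm l e C hbdd happrox x
end

section
/- Let A be a C*-algebra, I an index set, and (p_i)_{i∈I}, (q_i)_{i∈I} families in A such that the nets of finite partial sums ∑_{i∈F} p_i p_i* and ∑_{i∈F} q_i* q_i (over finite subsets F ⊆ I) converge in norm in A. Then the net of finite partial sums ∑_{i∈F} p_i ⊗ q_i converges in the Haagerup norm in A ⊗_h A, and ‖∑_{i∈I} p_i ⊗ q_i‖_h² ≤ ‖∑_{i∈I} p_i p_i*‖ · ‖∑_{i∈I} q_i* q_i‖. -/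
/-! Every finite partial sum `∑_{i ∈ F} pᵢ ⊗ qᵢ` is one of the representations in the infimum
defining the Haagerup norm, so its norm squared is at most `‖∑_F pᵢ pᵢ*‖ · ‖∑_F qᵢ* qᵢ‖`.
Applied to finite sets disjoint from a large enough finite set, this bound makes the partial
sums Cauchy; completeness gives the sum, and the bound passes to the limit. -/

open scoped TensorProduct

lemma haagerupNorm_sum_tmul_le {A : Type*} [NonUnitalNormedRing A] [StarRing A]
    [NormedSpace ℂ A] {I : Type*} (p q : I → A) (F : Finset I) :
    haagerupNorm A (∑ i ∈ F, p i ⊗ₜ[ℂ] q i) ≤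
      √‖∑ i ∈ F, p i * star (p i)‖ * √‖∑ i ∈ F, star (q i) * q i‖ := by
  refine csInf_le ⟨0, by rintro c ⟨n, p', q', -, rfl⟩; positivity⟩
    ⟨F.card, fun j => p (F.equivFin.symm j), fun j => q (F.equivFin.symm j), ?_, ?_⟩ <;>
  simp only [← Finset.sum_coe_sort F, ← F.equivFin.symm.sum_comp]

section PartialSumBound

variable {I E F G : Type*} [SeminormedAddCommGroup E] [SeminormedAddCommGroup F]
  [SeminormedAddCommGroup G] {g : I → E} {a : I → F} {b : I → G}

lemma summable_of_norm_sum_sq_le_mul [CompleteSpace E] (ha : Summable a) (hb : Summable b)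
    (h : ∀ t : Finset I, ‖∑ i ∈ t, g i‖ ^ 2 ≤ ‖∑ i ∈ t, a i‖ * ‖∑ i ∈ t, b i‖) :
    Summable g := by
  classical
  refine summable_iff_vanishing_norm.2 fun ε hε => ?_
  obtain ⟨sa, hsa⟩ := cauchySeq_finset_iff_vanishing_norm.1 ha.hasSum.cauchySeq ε hε
  obtain ⟨sb, hsb⟩ := cauchySeq_finset_iff_vanishing_norm.1 hb.hasSum.cauchySeq ε hε
  refine ⟨sa ∪ sb, fun t ht => lt_of_pow_lt_pow_left₀ 2 hε.le ?_⟩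
  rw [Finset.disjoint_union_right] at ht
  calc ‖∑ i ∈ t, g i‖ ^ 2 ≤ ‖∑ i ∈ t, a i‖ * ‖∑ i ∈ t, b i‖ := h t
    _ < ε ^ 2 := by
      rw [sq]
      exact mul_lt_mul'' (hsa t ht.1) (hsb t ht.2) (norm_nonneg _) (norm_nonneg _)

lemma HasSum.norm_sq_le_mul_of_norm_sum_sq_le {s : E} {α : F} {β : G} (hg : HasSum g s)
    (ha : HasSum a α) (hb : HasSum b β)
    (h : ∀ t : Finset I, ‖∑ i ∈ t, g i‖ ^ 2 ≤ ‖∑ i ∈ t, a i‖ * ‖∑ i ∈ t, b i‖) :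
    ‖s‖ ^ 2 ≤ ‖α‖ * ‖β‖ :=
  le_of_tendsto_of_tendsto' (hg.norm.pow 2) (ha.norm.mul hb.norm) h

end PartialSumBound

theorem summable_haagerup_of_row_column_general
    {A : Type*}
    [NonUnitalNormedRing A] [StarRing A]
    [NormedSpace ℂ A]
    {X : Type*} [NormedAddCommGroup X] [NormedSpace ℂ X] [CompleteSpace X]
    (ι : A ⊗[ℂ] A →ₗ[ℂ] X)
    (hiso : ∀ y : A ⊗[ℂ] A, ‖ι y‖ = haagerupNorm A y)
    {I : Type*} (p q : I → A) (P Q : A)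
    (hp : HasSum (fun i => p i * star (p i)) P)
    (hq : HasSum (fun i => star (q i) * q i) Q) :
    ∃ s : X, HasSum (fun i => ι (p i ⊗ₜ[ℂ] q i)) s ∧ ‖s‖ ^ 2 ≤ ‖P‖ * ‖Q‖ := by
  have hbound : ∀ F : Finset I, ‖∑ i ∈ F, ι (p i ⊗ₜ[ℂ] q i)‖ ^ 2 ≤
      ‖∑ i ∈ F, p i * star (p i)‖ * ‖∑ i ∈ F, star (q i) * q i‖ := fun F => by
    rw [← Real.le_sqrt (norm_nonneg _) (by positivity), Real.sqrt_mul (norm_nonneg _),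
      ← map_sum, hiso]
    exact haagerupNorm_sum_tmul_le p q F
  obtain ⟨s, hs⟩ := summable_of_norm_sum_sq_le_mul hp.summable hq.summable hbound
  exact ⟨s, hs, hs.norm_sq_le_mul_of_norm_sum_sq_le hp hq hbound⟩

/-- If `(pᵢ)` and `(qᵢ)` are families in `A` such that the nets of finite
partial sums of `∑ pᵢ pᵢ*` and `∑ qᵢ* qᵢ` converge in norm, then the net of finite partial
sums `∑ pᵢ ⊗ qᵢ` converges in the Haagerup tensor product `A ⊗_h A` (modelled as an
abstract completion `X` of `A ⊙ A` for the Haagerup norm), with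
`‖∑ pᵢ ⊗ qᵢ‖² ≤ ‖∑ pᵢ pᵢ*‖ · ‖∑ qᵢ* qᵢ‖`. -/
theorem summable_haagerup_of_row_column
    {A : Type*}
    [NonUnitalNormedRing A] [StarRing A] [CStarRing A] [CompleteSpace A]
    [NormedSpace ℂ A] [IsScalarTower ℂ A A] [SMulCommClass ℂ A A] [StarModule ℂ A]
    {X : Type*} [NormedAddCommGroup X] [NormedSpace ℂ X] [CompleteSpace X]
    (ι : A ⊗[ℂ] A →ₗ[ℂ] X)
    (hiso : ∀ y : A ⊗[ℂ] A, ‖ι y‖ = haagerupNorm A y)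
    (hdense : DenseRange ι)
    {I : Type*} (p q : I → A) (P Q : A)
    (hp : HasSum (fun i => p i * star (p i)) P)
    (hq : HasSum (fun i => star (q i) * q i) Q) :
    ∃ s : X, HasSum (fun i => ι (p i ⊗ₜ[ℂ] q i)) s ∧ ‖s‖ ^ 2 ≤ ‖P‖ * ‖Q‖ :=
  summable_haagerup_of_row_column_general ι hiso p q P Q hp hq
end

section
/- Let A be a C*-algebra and φ : A → M(A ⊗ A) a comultiplication such that φ(A)(1 ⊗ A) ⊆ A ⊗ A and φ(A)(A ⊗ 1) ⊆ A ⊗ A. Then the maps T_1(a ⊗ b) = φ(a)(1 ⊗ b) and T_2(a ⊗ b) = (a ⊗ 1)φ(b), defined on A ⊙ A, are contractive from A ⊙ A equipped with the Haagerup norm to A ⊗ A with the C*-norm: ‖T_k(x)‖ ≤ ‖x‖_h for k = 1, 2 and all x ∈ A ⊙ A. -/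
/-!
Write `x = ∑ pᵢ ⊗ qᵢ`. Then `T₁ x = ∑ φ(pᵢ) π₂(qᵢ)` is the product of a row and a column over `E`,
so the Cauchy–Schwarz inequality for the `E`-valued inner product on `Eⁿ` bounds its norm by
`‖∑ φ(pᵢ) φ(pᵢ)*‖^{1/2} ‖∑ π₂(qᵢ)* π₂(qᵢ)‖^{1/2} = ‖φ(∑ pᵢ pᵢ*)‖^{1/2} ‖π₂(∑ qᵢ* qᵢ)‖^{1/2}`,
and *-homomorphisms between C⋆-algebras are contractive. Taking the infimum over all
representations of `x` gives the Haagerup norm; `T₂` is handled in the same way with `π₁` and `φ`.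
-/

open scoped TensorProduct

open scoped InnerProductSpace WithCStarModule

theorem TensorProduct.exists_fin_sum_tmul {R M N : Type*} [CommSemiring R] [AddCommMonoid M]
    [AddCommMonoid N] [Module R M] [Module R N] (x : M ⊗[R] N) :
    ∃ (n : ℕ) (p : Fin n → M) (q : Fin n → N), x = ∑ i, p i ⊗ₜ[R] q i := by
  obtain ⟨S, rfl⟩ := exists_finset x
  refine ⟨S.card, fun i ↦ (S.equivFin.symm i).1.1, fun i ↦ (S.equivFin.symm i).1.2, ?_⟩
  rw [← Finset.sum_coe_sort]
  exact (Fintype.sum_equiv S.equivFin.symm _ _ fun _ ↦ rfl).symm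

theorem CStarAlgebra.norm_sum_mul_le_of_starOrderedRing {B : Type*} [NonUnitalCStarAlgebra B]
    [PartialOrder B] [StarOrderedRing B] {n : ℕ} (u v : Fin n → B) :
    ‖∑ i, u i * v i‖ ≤ √‖∑ i, u i * star (u i)‖ * √‖∑ i, star (v i) * v i‖ := by
  let row : C⋆ᵐᵒᵈ(B, Fin n → B) := (WithCStarModule.equiv B (Fin n → B)).symm u
  let col : C⋆ᵐᵒᵈ(B, Fin n → B) := (WithCStarModule.equiv B (Fin n → B)).symm (star v)
  have h_inner : ⟪col, row⟫_B = ∑ i, u i * v i := by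
    simp [row, col, WithCStarModule.pi_inner, WithCStarModule.inner_def]
  have h_row : ‖row‖ = √‖∑ i, u i * star (u i)‖ := by
    simp [WithCStarModule.pi_norm, row, WithCStarModule.inner_def]
  have h_col : ‖col‖ = √‖∑ i, star (v i) * v i‖ := by
    simp [WithCStarModule.pi_norm, col, WithCStarModule.inner_def]
  calc ‖∑ i, u i * v i‖ = ‖⟪col, row⟫_B‖ := by rw [h_inner]
    _ ≤ ‖col‖ * ‖row‖ := CStarModule.norm_inner_le _
    _ = _ := by rw [h_row, h_col, mul_comm]

theorem CStarAlgebra.norm_sum_mul_le {E : Type*} [NonUnitalCStarAlgebra E] {n : ℕ}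
    (u v : Fin n → E) :
    ‖∑ i, u i * v i‖ ≤ √‖∑ i, u i * star (u i)‖ * √‖∑ i, star (v i) * v i‖ := by
  -- The Hilbert-module Cauchy–Schwarz inequality needs an order, which the unitization carries.
  let _ := CStarAlgebra.spectralOrder (Unitization ℂ E)
  have := CStarAlgebra.spectralOrderedRing (Unitization ℂ E)
  let ι := Unitization.inrNonUnitalStarAlgHom ℂ E
  have h := CStarAlgebra.norm_sum_mul_le_of_starOrderedRing (ι ∘ u) (ι ∘ v)
  have norm_ι (a : E) : ‖ι a‖ = ‖a‖ := Unitization.norm_inr a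
  simpa only [Function.comp_apply, ← map_star ι, ← map_mul ι, ← map_sum ι, norm_ι] using h

theorem norm_apply_le_haagerupNorm {A E : Type*} [NonUnitalCStarAlgebra A]
    [NonUnitalCStarAlgebra E] (ψ₁ ψ₂ : A →⋆ₙₐ[ℂ] E) (T : A ⊗[ℂ] A →ₗ[ℂ] E)
    (hT : ∀ a b : A, T (a ⊗ₜ[ℂ] b) = ψ₁ a * ψ₂ b) (x : A ⊗[ℂ] A) :
    ‖T x‖ ≤ haagerupNorm A x := by
  obtain ⟨n, p, q, hx⟩ := TensorProduct.exists_fin_sum_tmul x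
  refine le_csInf ⟨_, n, p, q, hx, rfl⟩ ?_
  rintro c ⟨n, p, q, rfl, rfl⟩
  have h_rows : ∑ i, ψ₁ (p i) * star (ψ₁ (p i)) = ψ₁ (∑ i, p i * star (p i)) := by
    simp only [map_sum, map_mul, map_star]
  have h_cols : ∑ i, star (ψ₂ (q i)) * ψ₂ (q i) = ψ₂ (∑ i, star (q i) * q i) := by
    simp only [map_sum, map_mul, map_star]
  calc ‖T (∑ i, p i ⊗ₜ[ℂ] q i)‖ = ‖∑ i, ψ₁ (p i) * ψ₂ (q i)‖ := by simp only [map_sum, hT]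
    _ ≤ √‖ψ₁ (∑ i, p i * star (p i))‖ * √‖ψ₂ (∑ i, star (q i) * q i)‖ := by
      rw [← h_rows, ← h_cols]; exact CStarAlgebra.norm_sum_mul_le _ _
    _ ≤ _ := by gcongr <;> exact NonUnitalStarAlgHom.norm_apply_le _ _

theorem comultiplication_T1_T2_contractive_general
    {A E : Type*}
    [NonUnitalNormedRing A] [StarRing A] [CStarRing A] [CompleteSpace A]
    [NormedSpace ℂ A] [IsScalarTower ℂ A A] [SMulCommClass ℂ A A] [StarModule ℂ A]
    [NonUnitalNormedRing E] [StarRing E] [CStarRing E] [CompleteSpace E]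
    [NormedSpace ℂ E] [IsScalarTower ℂ E E] [SMulCommClass ℂ E E] [StarModule ℂ E]
    (φ π₁ π₂ : A →⋆ₙₐ[ℂ] E)
    (T₁ T₂ : A ⊗[ℂ] A →ₗ[ℂ] E)
    (hT₁ : ∀ a b : A, T₁ (a ⊗ₜ[ℂ] b) = φ a * π₂ b)
    (hT₂ : ∀ a b : A, T₂ (a ⊗ₜ[ℂ] b) = π₁ a * φ b)
    (x : A ⊗[ℂ] A) :
    ‖T₁ x‖ ≤ haagerupNorm A x ∧ ‖T₂ x‖ ≤ haagerupNorm A x := by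
  let _ : NonUnitalCStarAlgebra A := {}
  let _ : NonUnitalCStarAlgebra E := {}
  exact ⟨norm_apply_le_haagerupNorm φ π₂ T₁ hT₁ x, norm_apply_le_haagerupNorm π₁ φ T₂ hT₂ x⟩

/-- Let `φ : A → M(A ⊗ A)` be a comultiplication with
`φ(A)(1 ⊗ A) ⊆ A ⊗ A` and `φ(A)(A ⊗ 1) ⊆ A ⊗ A`.  Then the maps
`T₁(a ⊗ b) = φ(a)(1 ⊗ b)` and `T₂(a ⊗ b) = (a ⊗ 1)φ(b)` are contractive from `A ⊙ A`
with the Haagerup norm to `A ⊗ A` with the C*-norm.  Here `M(A ⊗ A)` is modelled by a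
C*-algebra `E` containing a copy of the minimal tensor product `A ⊗ A`: `π₁, π₂` are the
commuting isometric embeddings `a ↦ a ⊗ 1`, `b ↦ 1 ⊗ b`, `j` is the induced embedding of
`A ⊙ A`, and `φ : A → E` is a *-homomorphism whose products with `π₂(A)` (resp. `π₁(A)`)
lie in the closure of the range of `j`, i.e. in `A ⊗ A`. -/
theorem comultiplication_T1_T2_contractive
    {A E : Type*}
    [NonUnitalNormedRing A] [StarRing A] [CStarRing A] [CompleteSpace A]
    [NormedSpace ℂ A] [IsScalarTower ℂ A A] [SMulCommClass ℂ A A] [StarModule ℂ A]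
    [NonUnitalNormedRing E] [StarRing E] [CStarRing E] [CompleteSpace E]
    [NormedSpace ℂ E] [IsScalarTower ℂ E E] [SMulCommClass ℂ E E] [StarModule ℂ E]
    (φ π₁ π₂ : A →⋆ₙₐ[ℂ] E)
    (hcomm : ∀ a b : A, Commute (π₁ a) (π₂ b))
    (hπ₁ : ∀ a : A, ‖π₁ a‖ = ‖a‖) (hπ₂ : ∀ a : A, ‖π₂ a‖ = ‖a‖)
    (j : A ⊗[ℂ] A →ₗ[ℂ] E) (hj : ∀ a b : A, j (a ⊗ₜ[ℂ] b) = π₁ a * π₂ b)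
    (hrange₁ : ∀ a b : A, φ a * π₂ b ∈ closure (Set.range j))
    (hrange₂ : ∀ a b : A, π₁ a * φ b ∈ closure (Set.range j))
    (T₁ T₂ : A ⊗[ℂ] A →ₗ[ℂ] E)
    (hT₁ : ∀ a b : A, T₁ (a ⊗ₜ[ℂ] b) = φ a * π₂ b)
    (hT₂ : ∀ a b : A, T₂ (a ⊗ₜ[ℂ] b) = π₁ a * φ b)
    (x : A ⊗[ℂ] A) :
    ‖T₁ x‖ ≤ haagerupNorm A x ∧ ‖T₂ x‖ ≤ haagerupNorm A x :=
  comultiplication_T1_T2_contractive_general φ π₁ π₂ T₁ T₂ hT₁ hT₂ x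
end

section
/- Let A be a C*-algebra with comultiplication φ such that φ(A)(1⊗A), φ(A)(A⊗1) ⊆ A ⊗ A, and assume the map T_2 : a ⊗ b ↦ (a ⊗ 1)φ(b) is injective on A ⊙ A. If x ∈ M(A) satisfies φ(x) = x ⊗ 1, then x ∈ ℂ·1. -/
/-!
Injectivity of `T₂` turns `φ(x) = x ⊗ 1` into the identity `a ⊗ xb = ax ⊗ b` in `A ⊙ A`.
Contracting either leg with a functional `ψ` with `ψ(a₀) = 1` shows that left and right
multiplication by `x` are both multiplication by the scalar `ψ(a₀x)`.
-/

open scoped TensorProduct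

namespace TensorProduct

theorem dual_apply_smul_eq_of_tmul_eq {R V W : Type*} [CommSemiring R]
    [AddCommMonoid V] [Module R V] [AddCommMonoid W] [Module R W] {f : V → V} {g : W → W}
    (h : ∀ a b, a ⊗ₜ[R] g b = f a ⊗ₜ[R] b) (ψ : Module.Dual R V) (a : V) (b : W) :
    ψ a • g b = ψ (f a) • b := by
  simpa using congrArg (TensorProduct.lid R W ∘ ψ.rTensor W) (h a b)

theorem exists_eq_smul_of_tmul_eq {K V : Type*} [Field K] [AddCommGroup V] [Module K V]
    {f g : V → V} (h : ∀ a b, a ⊗ₜ[K] g b = f a ⊗ₜ[K] b) :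
    ∃ c : K, (∀ b, g b = c • b) ∧ (∀ a, f a = c • a) := by
  rcases subsingleton_or_nontrivial V with _ | _
  · exact ⟨0, fun _ => Subsingleton.elim _ _, fun _ => Subsingleton.elim _ _⟩
  obtain ⟨a₀, ha₀⟩ := exists_ne (0 : V)
  obtain ⟨ψ, hψ⟩ := Module.Projective.exists_dual_eq_one K ha₀
  have hg : ∀ b, g b = ψ (f a₀) • b := fun b => by
    simpa [hψ] using dual_apply_smul_eq_of_tmul_eq h ψ a₀ b
  have h_swap : ∀ b a, b ⊗ₜ[K] f a = g b ⊗ₜ[K] a := fun b a => by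
    simpa using (congrArg (TensorProduct.comm K V V) (h a b)).symm
  refine ⟨ψ (f a₀), hg, fun a => ?_⟩
  have := dual_apply_smul_eq_of_tmul_eq h_swap ψ a₀ a
  rwa [hψ, one_smul, hg, map_smul, hψ, smul_eq_mul, mul_one] at this

end TensorProduct

/-- The multiplier `x` is modelled by its left and right multiplication maps `L b = x b`,
`R a = a x`, and `φ(x) = x ⊗ 1` by its consequence `(a ⊗ 1)φ(xb) = (ax ⊗ 1)φ(b)`. -/
theorem multiplier_scalar_of_comul_fix_general
    {A E : Type*}
    [NonUnitalNormedRing A] [StarRing A]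
    [NormedSpace ℂ A]
    [NonUnitalNormedRing E] [StarRing E]
    [NormedSpace ℂ E]
    (φ π₁ : A →⋆ₙₐ[ℂ] E)
    (T₂ : A ⊗[ℂ] A →ₗ[ℂ] E)
    (hT₂ : ∀ a b : A, T₂ (a ⊗ₜ[ℂ] b) = π₁ a * φ b)
    (hinj : Function.Injective T₂)
    (L R : A →L[ℂ] A)
    (hx : ∀ a b : A, π₁ a * φ (L b) = π₁ (R a) * φ b) :
    ∃ c : ℂ, (∀ a : A, L a = c • a) ∧ (∀ a : A, R a = c • a) :=
  TensorProduct.exists_eq_smul_of_tmul_eq fun a b => hinj (by rw [hT₂, hT₂, hx])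

/-- Let `φ` be a comultiplication on `A` such that the map
`T₂ : a ⊗ b ↦ (a ⊗ 1)φ(b)` is injective on the algebraic tensor product `A ⊙ A`.
If a multiplier `x ∈ M(A)` satisfies `φ(x) = x ⊗ 1`, then `x ∈ ℂ·1`.
The multiplier `x` is modelled by its pair of left/right multiplication maps `(L, R)`
with `a·L(b) = R(a)·b`; the relation `φ(x) = x ⊗ 1` is expressed through the extension
of `φ`: `(a ⊗ 1)φ(xb) = (ax ⊗ 1)φ(b)`, i.e. `π₁(a)·φ(L b) = π₁(R a)·φ(b)`; and the
conclusion `x ∈ ℂ·1` reads `L = R = c·id` for a scalar `c`. -/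
theorem multiplier_scalar_of_comul_fix
    {A E : Type*}
    [NonUnitalNormedRing A] [StarRing A] [CStarRing A] [CompleteSpace A]
    [NormedSpace ℂ A] [IsScalarTower ℂ A A] [SMulCommClass ℂ A A] [StarModule ℂ A]
    [NonUnitalNormedRing E] [StarRing E] [CStarRing E] [CompleteSpace E]
    [NormedSpace ℂ E] [IsScalarTower ℂ E E] [SMulCommClass ℂ E E] [StarModule ℂ E]
    (φ π₁ : A →⋆ₙₐ[ℂ] E)
    (T₂ : A ⊗[ℂ] A →ₗ[ℂ] E)
    (hT₂ : ∀ a b : A, T₂ (a ⊗ₜ[ℂ] b) = π₁ a * φ b)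
    (hinj : Function.Injective T₂)
    (L R : A →L[ℂ] A)
    (hcentral : ∀ a b : A, a * L b = R a * b)
    (hx : ∀ a b : A, π₁ a * φ (L b) = π₁ (R a) * φ b) :
    ∃ c : ℂ, (∀ a : A, L a = c • a) ∧ (∀ a : A, R a = c • a) :=
  multiplier_scalar_of_comul_fix_general φ π₁ T₂ hT₂ hinj L R hx
end

section
/- Let G be a locally compact semigroup (locally compact Hausdorff space with a continuous associative multiplication) whose comultiplication φ on C₀(G), φ(f)(p,q) = f(pq), satisfies: φ(f)(1 ⊗ g) ∈ C₀(G × G) and φ(f)(g ⊗ 1) ∈ C₀(G × G) for all f, g ∈ C₀(G); moreover φ(f)(1 ⊗ g) = 0 implies f = 0 or g = 0, and φ(f)(g ⊗ 1) = 0 implies f = 0 or g = 0. Then G is a topological group (the multiplication admits an identity, every element has an inverse, and inversion is continuous). -/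
/-!
Write `σ₁ (p, q) = (p q, q)` and `σ₂ (p, q) = (p q, p)`, so that `φ(f)(1 ⊗ g) = (f ⊗ g) ∘ σ₁` and
`φ(f)(g ⊗ 1) = (f ⊗ g) ∘ σ₂`. Testing the vanishing-at-infinity hypotheses against bump functions
shows that `σ₁` and `σ₂` are proper, hence have closed range; testing the injectivity hypotheses
against bumps supported in a box missing that range shows they are surjective. Surjectivity of both
maps says that `x a = b` and `a y = b` are solvable, which makes the semigroup a group. Then `σ₁` is
a continuous closed bijection, i.e. a homeomorphism, and `g⁻¹` is the first coordinate of
`σ₁⁻¹ (e, g)`.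
-/

open scoped ZeroAtInfty CompactlySupported
open Filter Set Function

lemma ZeroAtInftyContinuousMap.exists_eqOn_one_of_isCompact_subset_isOpen {X : Type*}
    [TopologicalSpace X] [T2Space X] [LocallyCompactSpace X] {K U : Set X}
    (hK : IsCompact K) (hU : IsOpen U) (hKU : K ⊆ U) :
    ∃ f : C₀(X, ℂ), EqOn f 1 K ∧ ∀ x ∉ U, f x = 0 := by
  obtain ⟨f, hf_one, hf_cpt, hf_supp, -⟩ :=
    exists_continuousMap_one_of_isCompact_subset_isOpen hK hU hKU
  let F : C_c(X, ℂ) :=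
    ⟨(⟨Complex.ofReal, Complex.continuous_ofReal⟩ : C(ℝ, ℂ)).comp f,
      HasCompactSupport.comp_left (f := f) hf_cpt Complex.ofReal_zero⟩
  refine ⟨F, fun x hx => ?_, fun x hx => ?_⟩
  · simp [F, hf_one hx]
  · simp [F, image_eq_zero_of_notMem_tsupport fun h => hx (hf_supp h)]

section ProperSurjective

variable {X Y Z : Type*}
  [TopologicalSpace Y] [T2Space Y] [LocallyCompactSpace Y]
  [TopologicalSpace Z] [T2Space Z] [LocallyCompactSpace Z]

lemma isProperMap_of_tendsto_mul_cocompact [TopologicalSpace X] {σ : X → Y × Z} (hσ : Continuous σ)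
    (h : ∀ (f : C₀(Y, ℂ)) (g : C₀(Z, ℂ)),
      Tendsto (fun x => f (σ x).1 * g (σ x).2) (cocompact X) (nhds 0)) :
    IsProperMap σ := by
  refine isProperMap_iff_isCompact_preimage.2 ⟨hσ, fun K hK => ?_⟩
  obtain ⟨f, hf, -⟩ := ZeroAtInftyContinuousMap.exists_eqOn_one_of_isCompact_subset_isOpen
    (hK.image continuous_fst) isOpen_univ (subset_univ _)
  obtain ⟨g, hg, -⟩ := ZeroAtInftyContinuousMap.exists_eqOn_one_of_isCompact_subset_isOpen
    (hK.image continuous_snd) isOpen_univ (subset_univ _)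
  obtain ⟨C, hC, hCsub⟩ := mem_cocompact.1 ((h f g).eventually_ne zero_ne_one)
  refine hC.of_isClosed_subset (hK.isClosed.preimage hσ) fun x hx => ?_
  by_contra hxC
  have hfg : f (σ x).1 * g (σ x).2 = 1 := by
    rw [hf (mem_image_of_mem _ hx), hg (mem_image_of_mem _ hx), Pi.one_apply, Pi.one_apply, one_mul]
  exact hCsub hxC hfg

lemma surjective_of_isClosed_range_of_mul_eq_zero {σ : X → Y × Z} (hσ : IsClosed (range σ))
    (h : ∀ (f : C₀(Y, ℂ)) (g : C₀(Z, ℂ)), (∀ x, f (σ x).1 * g (σ x).2 = 0) → f = 0 ∨ g = 0) :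
    Surjective σ := by
  rintro ⟨a, b⟩
  by_contra hab
  obtain ⟨U, V, hU, hV, haU, hbV, hUV⟩ :=
    isOpen_prod_iff.1 hσ.isOpen_compl a b fun ⟨x, hx⟩ => hab ⟨x, hx⟩
  obtain ⟨f, hfa, hfU⟩ := ZeroAtInftyContinuousMap.exists_eqOn_one_of_isCompact_subset_isOpen
    isCompact_singleton hU (singleton_subset_iff.2 haU)
  obtain ⟨g, hgb, hgV⟩ := ZeroAtInftyContinuousMap.exists_eqOn_one_of_isCompact_subset_isOpen
    isCompact_singleton hV (singleton_subset_iff.2 hbV)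
  have hfg : ∀ x, f (σ x).1 * g (σ x).2 = 0 := by
    intro x
    by_cases hx : (σ x).1 ∈ U
    · rw [hgV _ fun hx' => hUV (mk_mem_prod hx hx') ⟨x, rfl⟩, mul_zero]
    · rw [hfU _ hx, zero_mul]
  rcases h f g hfg with rfl | rfl
  · exact zero_ne_one (hfa (mem_singleton a))
  · exact zero_ne_one (hgb (mem_singleton b))

end ProperSurjective

lemma Semigroup.exists_identity_inverses_of_forall_exists_mul_eq {G : Type*} [Semigroup G]
    [Nonempty G] (hl : ∀ a b : G, ∃ x, x * a = b) (hr : ∀ a b : G, ∃ y, a * y = b) :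
    ∃ e : G, (∀ g, e * g = g ∧ g * e = g) ∧ ∀ g, ∃ h, g * h = e ∧ h * g = e := by
  obtain ⟨a⟩ := ‹Nonempty G›
  obtain ⟨e, hea⟩ := hl a a
  obtain ⟨e', hae'⟩ := hr a a
  have he : ∀ b, e * b = b := fun b => by
    obtain ⟨y, rfl⟩ := hr a b
    rw [← mul_assoc, hea]
  have he' : ∀ b, b * e' = b := fun b => by
    obtain ⟨x, rfl⟩ := hl a b
    rw [mul_assoc, hae']
  have hee' : e = e' := (he' e).symm.trans (he e')
  subst hee'
  refine ⟨e, fun g => ⟨he g, he' g⟩, fun g => ?_⟩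
  obtain ⟨l, hl⟩ := hl g e
  obtain ⟨r, hr⟩ := hr g e
  have hlr : l = r := by rw [← he' l, ← hr, ← mul_assoc, hl, he]
  exact ⟨r, hr, hlr ▸ hl⟩

/-- Let `G` be a locally compact Hausdorff semigroup whose
comultiplication `φ(f)(p,q) = f(pq)` on `C₀(G)` satisfies `φ(f)(1 ⊗ g) ∈ C₀(G × G)` and
`φ(f)(g ⊗ 1) ∈ C₀(G × G)` for all `f, g ∈ C₀(G)` (i.e. the functions
`(p,q) ↦ f(pq)g(q)` and `(p,q) ↦ f(pq)g(p)` vanish at infinity on `G × G`), and such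
that `φ(f)(1 ⊗ g) = 0` implies `f = 0` or `g = 0`, and similarly on the other side.
Then `G` is a topological group: there is an identity, every element is invertible, and
inversion is continuous. -/
theorem topological_group_of_C0_comul
    {G : Type*} [Semigroup G] [TopologicalSpace G] [ContinuousMul G]
    [LocallyCompactSpace G] [T2Space G] [Nonempty G]
    (hC01 : ∀ f g : C₀(G, ℂ),
      Filter.Tendsto (fun pq : G × G => f (pq.1 * pq.2) * g pq.2)
        (Filter.cocompact (G × G)) (nhds 0))
    (hC02 : ∀ f g : C₀(G, ℂ),
      Filter.Tendsto (fun pq : G × G => f (pq.1 * pq.2) * g pq.1)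
        (Filter.cocompact (G × G)) (nhds 0))
    (hinj1 : ∀ f g : C₀(G, ℂ), (∀ p q : G, f (p * q) * g q = 0) → f = 0 ∨ g = 0)
    (hinj2 : ∀ f g : C₀(G, ℂ), (∀ p q : G, f (p * q) * g p = 0) → f = 0 ∨ g = 0) :
    ∃ e : G, (∀ g : G, e * g = g ∧ g * e = g) ∧
      (∃ inv : G → G, Continuous inv ∧ ∀ g : G, g * inv g = e ∧ inv g * g = e) := by
  let σ₁ : G × G → G × G := fun x => (x.1 * x.2, x.2)
  let σ₂ : G × G → G × G := fun x => (x.1 * x.2, x.1)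
  have hσ₁ : IsProperMap σ₁ := isProperMap_of_tendsto_mul_cocompact (by fun_prop) hC01
  have hσ₂ : IsProperMap σ₂ := isProperMap_of_tendsto_mul_cocompact (by fun_prop) hC02
  have hσ₁_surj : Surjective σ₁ := surjective_of_isClosed_range_of_mul_eq_zero
    hσ₁.isClosed_range fun f g h => hinj1 f g fun p q => h (p, q)
  have hσ₂_surj : Surjective σ₂ := surjective_of_isClosed_range_of_mul_eq_zero
    hσ₂.isClosed_range fun f g h => hinj2 f g fun p q => h (p, q)
  have hl : ∀ a b : G, ∃ x, x * a = b := fun a b => by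
    obtain ⟨⟨p, q⟩, h⟩ := hσ₁_surj (b, a)
    obtain ⟨rfl, rfl⟩ := Prod.mk.inj h
    exact ⟨p, rfl⟩
  have hr : ∀ a b : G, ∃ y, a * y = b := fun a b => by
    obtain ⟨⟨p, q⟩, h⟩ := hσ₂_surj (b, a)
    obtain ⟨rfl, rfl⟩ := Prod.mk.inj h
    exact ⟨q, rfl⟩
  obtain ⟨e, he, hinv⟩ := Semigroup.exists_identity_inverses_of_forall_exists_mul_eq hl hr
  have hσ₁_inj : Injective σ₁ := fun ⟨p, q⟩ ⟨p', q'⟩ h => by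
    obtain ⟨hpq, rfl⟩ := Prod.mk.inj h
    obtain ⟨r, hqr, -⟩ := hinv q
    rw [← (he p).2, ← (he p').2, ← hqr, ← mul_assoc, ← mul_assoc, hpq]
  let Φ := (isHomeomorph_iff_continuous_isClosedMap_bijective.2
    ⟨hσ₁.continuous, hσ₁.isClosedMap, hσ₁_inj, hσ₁_surj⟩).homeomorph
  refine ⟨e, he, fun g => (Φ.symm (e, g)).1, by fun_prop, fun g => ?_⟩
  obtain ⟨h, hgh, hhg⟩ := hinv g
  have hΦ : Φ.symm (e, g) = (h, g) := Φ.symm_apply_eq.2 (by simp [Φ, σ₁, hhg])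
  simp [hΦ, hgh, hhg]
end

section
/- Let G be a locally compact Hausdorff space with a continuous associative multiplication satisfying Gs = G and sG = G for all s ∈ G (left and right divisibility). Then G is a group: there is an identity element and every element has an inverse. -/
section DivisibleSemigroup

variable {G : Type*} [Semigroup G]

theorem isLeftIdentity_of_mul_eq_self (hright : ∀ s t : G, ∃ r : G, s * r = t)
    {e s : G} (he : e * s = s) (g : G) : e * g = g := by
  obtain ⟨r, rfl⟩ := hright s g
  rw [← mul_assoc, he]

theorem isRightIdentity_of_mul_eq_self (hleft : ∀ s t : G, ∃ r : G, r * s = t)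
    {f s : G} (hf : s * f = s) (g : G) : g * f = g := by
  obtain ⟨r, rfl⟩ := hleft s g
  rw [mul_assoc, hf]

theorem left_inv_eq_right_inv_of_isIdentity {e a b c : G}
    (hL : ∀ g : G, e * g = g) (hR : ∀ g : G, g * e = g) (hb : b * a = e) (hc : a * c = e) :
    b = c :=
  calc b = b * (a * c) := by rw [hc, hR]
    _ = (b * a) * c := (mul_assoc b a c).symm
    _ = c := by rw [hb, hL]

end DivisibleSemigroup

theorem group_of_divisibility_general
    {G : Type*} [Semigroup G] [Nonempty G]
    (hleft : ∀ s t : G, ∃ r : G, r * s = t)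
    (hright : ∀ s t : G, ∃ r : G, s * r = t) :
    ∃ e : G, (∀ g : G, e * g = g ∧ g * e = g) ∧
      (∀ g : G, ∃ g' : G, g * g' = e ∧ g' * g = e) := by
  obtain ⟨s⟩ := ‹Nonempty G›
  obtain ⟨e, he⟩ := hleft s s
  obtain ⟨f, hf⟩ := hright s s
  have hL := isLeftIdentity_of_mul_eq_self hright he
  have hR := isRightIdentity_of_mul_eq_self hleft hf
  obtain rfl : e = f := (hR e).symm.trans (hL f)
  refine ⟨e, fun g => ⟨hL g, hR g⟩, fun g => ?_⟩
  obtain ⟨g', hg'⟩ := hright g e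
  obtain ⟨g'', hg''⟩ := hleft g e
  obtain rfl := left_inv_eq_right_inv_of_isIdentity hL hR hg'' hg'
  exact ⟨g'', hg', hg''⟩

/-- Let `G` be a (nonempty) locally compact Hausdorff space with a
continuous associative multiplication satisfying `Gs = G` and `sG = G` for all `s ∈ G`.
Then `G` is a group: there is an identity element and every element has an inverse.
(The argument is purely algebraic.) -/
theorem group_of_divisibility
    {G : Type*} [Semigroup G] [TopologicalSpace G] [ContinuousMul G]
    [LocallyCompactSpace G] [T2Space G] [Nonempty G]
    (hleft : ∀ s t : G, ∃ r : G, r * s = t)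
    (hright : ∀ s t : G, ∃ r : G, s * r = t) :
    ∃ e : G, (∀ g : G, e * g = g ∧ g * e = g) ∧
      (∀ g : G, ∃ g' : G, g * g' = e ∧ g' * g = e) :=
  group_of_divisibility_general hleft hright
end
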